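/- arXiv:2006.03147 — 3 statements merged into one kernel-verified Lean document; each statement's English description precedes it below -/
import Mathlib

section
/- Let G be a finite group acting on a field K of characteristic p > 0 with finite imperfection degree. Then [K : K^G] = [K^p : (K^G)^p], and consequently [K : K^p] = [K^G : (K^G)^p], i.e. K and its fixed field K^G have the same imperfection degree. -/
/-- The subfield of `p`-th powers `K^p` of a field `K`. -/
def pPowSubfield (K : Type*) [Field K] (p : ℕ) : Subfield K :=
  Subfield.closure {x : K | ∃ y : K, y ^ p = x}

/-- The degree `[B : A]` of a subfield `B` of `K` over (the trace in `B` of) a subfield `A`. -/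
noncomputable def relDeg {K : Type*} [Field K] (A B : Subfield K) : ℕ :=
  Module.finrank (Subfield.comap B.subtype A) B

/-!
Frobenius `x ↦ x ^ p` is an isomorphism of `K` onto `K^p` carrying `F := K^G` onto `F^p`, so
`[K : F] = [K^p : F^p]`. Computing `[K : F^p]` through the two towers `F^p ⊆ F ⊆ K` and
`F^p ⊆ K^p ⊆ K` gives `[F : F^p] [K : F] = [K^p : F^p] [K : K^p] = [K : F] [K : K^p]`, and
`[K : F]` is finite and nonzero because `G` is finite.
-/

open Module

namespace Subfield

variable {K L : Type*} [Field K] [Field L]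

theorem relDeg_eq_relfinrank (A B : Subfield K) : relDeg A B = relfinrank A B := by
  rw [relDeg, finrank_comap, fieldRange_subtype]

theorem relfinrank_map_fieldRange (f : K →+* L) (F : Subfield K) :
    relfinrank (F.map f) f.fieldRange = finrank F K := by
  rw [RingHom.fieldRange_eq_map, relfinrank_map_map, relfinrank_top_right]

end Subfield

open Subfield

section Frobenius

variable {K : Type*} [Field K] (p : ℕ) [Fact p.Prime] [CharP K p]

theorem pPowSubfield_eq_fieldRange_frobenius :
    pPowSubfield K p = (frobenius K p).fieldRange := by
  have h : {x : K | ∃ y : K, y ^ p = x} = ↑(frobenius K p).fieldRange := by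
    ext x
    simp [frobenius_def, eq_comm]
  rw [pPowSubfield, h, closure_eq]

theorem closure_pow_mem_eq_map_frobenius (F : Subfield K) :
    closure {x : K | ∃ y ∈ F, y ^ p = x} = F.map (frobenius K p) := by
  have h : {x : K | ∃ y ∈ F, y ^ p = x} = ↑(F.map (frobenius K p)) := by
    ext x
    simp [frobenius_def, eq_comm]
  rw [h, closure_eq]

theorem pPowSubfield_eq_comap_map_frobenius (F : Subfield K) :
    pPowSubfield F p = (F.map (frobenius K p)).comap F.subtype := by
  have h : {x : F | ∃ y : F, y ^ p = x} = ↑((F.map (frobenius K p)).comap F.subtype) := by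
    ext x
    constructor
    · rintro ⟨y, rfl⟩
      exact ⟨y, y.2, rfl⟩
    · rintro ⟨y, hy, hyx⟩
      exact ⟨⟨y, hy⟩, Subtype.ext hyx⟩
  rw [pPowSubfield, h, closure_eq]

theorem finrank_pPowSubfield_subfield (F : Subfield K) :
    finrank (pPowSubfield F p) F = relfinrank (F.map (frobenius K p)) F := by
  rw [pPowSubfield_eq_comap_map_frobenius, finrank_comap, fieldRange_subtype]

theorem relfinrank_map_frobenius_pPowSubfield (F : Subfield K) :
    relfinrank (F.map (frobenius K p)) (pPowSubfield K p) = finrank F K := by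
  rw [pPowSubfield_eq_fieldRange_frobenius, relfinrank_map_fieldRange]

theorem map_frobenius_le_pPowSubfield (F : Subfield K) :
    F.map (frobenius K p) ≤ pPowSubfield K p := by
  rw [pPowSubfield_eq_fieldRange_frobenius]
  rintro _ ⟨y, -, rfl⟩
  exact ⟨y, rfl⟩

theorem map_frobenius_le_self (F : Subfield K) : F.map (frobenius K p) ≤ F := by
  rintro x ⟨y, hy, rfl⟩
  exact pow_mem hy p

theorem finrank_pPowSubfield_eq_of_finiteDimensional (F : Subfield K) [FiniteDimensional F K] :
    finrank (pPowSubfield K p) K = finrank (pPowSubfield F p) F := by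
  rw [finrank_pPowSubfield_subfield]
  refine Nat.eq_of_mul_eq_mul_left (finrank_pos (R := F) (M := K)) ?_
  calc finrank F K * finrank (pPowSubfield K p) K
      = relfinrank (F.map (frobenius K p)) (pPowSubfield K p) * finrank (pPowSubfield K p) K := by
        rw [relfinrank_map_frobenius_pPowSubfield]
    _ = finrank (F.map (frobenius K p)) K :=
        relfinrank_mul_finrank_top (map_frobenius_le_pPowSubfield p F)
    _ = relfinrank (F.map (frobenius K p)) F * finrank F K :=
        (relfinrank_mul_finrank_top (map_frobenius_le_self p F)).symm
    _ = finrank F K * relfinrank (F.map (frobenius K p)) F := mul_comm _ _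

end Frobenius

theorem fixedField_same_imperfection_degree_general (p : ℕ) [Fact p.Prime] (K : Type*) [Field K]
    [CharP K p]
    (G : Type*) [Group G] [Finite G] [MulSemiringAction G K] :
    Module.finrank (FixedPoints.subfield G K) K
      = relDeg (Subfield.closure {x : K | ∃ y ∈ FixedPoints.subfield G K, y ^ p = x})
          (pPowSubfield K p) ∧
    Module.finrank (pPowSubfield K p) K
      = Module.finrank (pPowSubfield (FixedPoints.subfield G K) p)
          (FixedPoints.subfield G K) := by
  constructor
  · rw [relDeg_eq_relfinrank, closure_pow_mem_eq_map_frobenius,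
      relfinrank_map_frobenius_pPowSubfield]
  · exact finrank_pPowSubfield_eq_of_finiteDimensional p _

/-- Let `G` be a finite group acting on a field `K` of characteristic `p > 0` with finite
imperfection degree. Then `[K : K^G] = [K^p : (K^G)^p]` and consequently
`[K : K^p] = [K^G : (K^G)^p]`, i.e. `K` and its fixed field `K^G` have the same
imperfection degree. -/
theorem fixedField_same_imperfection_degree (p : ℕ) [Fact p.Prime] (K : Type*) [Field K]
    [CharP K p] [FiniteDimensional (pPowSubfield K p) K]
    (G : Type*) [Group G] [Finite G] [MulSemiringAction G K] :
    Module.finrank (FixedPoints.subfield G K) K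
      = relDeg (Subfield.closure {x : K | ∃ y ∈ FixedPoints.subfield G K, y ^ p = x})
          (pPowSubfield K p) ∧
    Module.finrank (pPowSubfield K p) K
      = Module.finrank (pPowSubfield (FixedPoints.subfield G K) p)
          (FixedPoints.subfield G K) :=
  fixedField_same_imperfection_degree_general p K G
end

section
/- There are no nontrivial actions of a finite group by field automorphisms on a separably closed field of positive characteristic: if K is separably closed with char(K) = p > 0 and σ is a field automorphism of K of finite order, then σ = id. -/
/-!
Replacing `σ` by a power, we may assume that `σ` has prime order `q`.

If `q = p`, this is Artin–Schreier theory. Take `w` of trace `1` (Dedekind independence); additive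
Hilbert 90 writes `w ^ p - w = σ c - c`, and a root `γ` of `X ^ p - X - c` makes
`d = σ γ - γ - w` satisfy `d ^ p = d`. So `d` lies in the prime field and its trace is `p • d = 0`,
whereas the trace of `d` is `-1`.

If `q ≠ p`, this is Kummer theory. A primitive `q`-th root of unity `ζ` is fixed by `σ`, because
`(ZMod q)ˣ` has no element of order `q`. A Lagrange resolvent gives `c ≠ 0` with `σ c = ζ c`; for
`β ^ q = c` the element `ξ = σ β / β` has `ξ ^ q = ζ` and norm `∏ σ ^ i ξ = 1`. Writing
`σ ξ = η ξ`, that norm is `ζ η ^ (q (q - 1) / 2)`, which forces `q = 2`, `ξ ^ 2 = -1`, `σ ξ = -ξ`.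
Then `t ↦ v σ(v)` with `v ^ 2 = t + ξ` shows that every natural number, in particular
`p - 1 = -1`, is the square of a `σ`-fixed element, which would have to be `± ξ`.
-/

open Finset

@[to_additive]
theorem Finset.prod_range_succ_eq_of_apply_eq {M : Type*} [CommMonoid M] {f : ℕ → M} {n : ℕ}
    (h : f n = f 0) : ∏ i ∈ range n, f (i + 1) = ∏ i ∈ range n, f i := by
  cases n with
  | zero => simp
  | succ n => rw [prod_range_succ, prod_range_succ' f, h]

namespace RingEquiv

variable {K : Type*} [Field K] (σ : K ≃+* K)

theorem pow_succ_apply (i : ℕ) (x : K) : (σ ^ (i + 1)) x = (σ ^ i) (σ x) := by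
  rw [pow_succ, RingAut.mul_apply]

theorem pow_apply_of_apply_eq_self {x : K} (hx : σ x = x) (i : ℕ) : (σ ^ i) x = x := by
  rw [RingAut.coe_pow]
  exact Function.iterate_fixed hx i

theorem pow_apply_of_apply_eq_mul {ξ η : K} (hη : σ η = η) (hξ : σ ξ = η * ξ) (i : ℕ) :
    (σ ^ i) ξ = η ^ i * ξ := by
  induction i with
  | zero => simp
  | succ i ih =>
    rw [pow_succ_apply, hξ, map_mul, ih, pow_apply_of_apply_eq_self σ hη, pow_succ]
    ring

theorem prod_range_orderOf_pow_apply_div_self {β : K} (hβ : β ≠ 0) :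
    ∏ i ∈ range (orderOf σ), (σ ^ i) (σ β / β) = 1 := by
  have hperiodic : (σ ^ orderOf σ) β = (σ ^ 0) β := by rw [pow_orderOf_eq_one, pow_zero]
  simp_rw [map_div₀, prod_div_distrib, ← pow_succ_apply]
  rw [prod_range_succ_eq_of_apply_eq (f := fun i => (σ ^ i) β) hperiodic, div_self]
  exact prod_ne_zero_iff.mpr fun i _ => (map_ne_zero _).mpr hβ

theorem exists_sum_mul_pow_apply_ne_zero {a : ℕ → K} {j : ℕ} (hj : j < orderOf σ)
    (ha : a j ≠ 0) : ∃ θ, ∑ i ∈ range (orderOf σ), a i * (σ ^ i) θ ≠ 0 := by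
  by_contra! h
  have hinj : Function.Injective fun i : Fin (orderOf σ) => (σ ^ (i : ℕ)).toMonoidHom :=
    fun i i' hii' => Fin.ext <| pow_injOn_Iio_orderOf i.isLt i'.isLt <|
      RingEquiv.ext fun x => DFunLike.congr_fun hii' x
  refine ha (Fintype.linearIndependent_iff.mp ((linearIndependent_monoidHom K K).comp _ hinj)
    (fun i => a i) ?_ ⟨j, hj⟩)
  ext θ
  have hθ := h θ
  rw [← Fin.sum_univ_eq_sum_range (fun i => a i * (σ ^ i) θ)] at hθ
  simpa using hθ

noncomputable def cyclicTrace : K →+ K where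
  toFun x := ∑ i ∈ range (orderOf σ), (σ ^ i) x
  map_zero' := by simp
  map_add' x y := by simp [sum_add_distrib]

theorem cyclicTrace_apply (x : K) : cyclicTrace σ x = ∑ i ∈ range (orderOf σ), (σ ^ i) x := rfl

theorem cyclicTrace_apply_self (x : K) : cyclicTrace σ (σ x) = cyclicTrace σ x := by
  have hperiodic : (σ ^ orderOf σ) x = (σ ^ 0) x := by rw [pow_orderOf_eq_one, pow_zero]
  simp_rw [cyclicTrace_apply, ← pow_succ_apply]
  exact sum_range_succ_eq_of_apply_eq (f := fun i => (σ ^ i) x) hperiodic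

theorem apply_cyclicTrace (x : K) : σ (cyclicTrace σ x) = cyclicTrace σ x := by
  calc σ (cyclicTrace σ x) = cyclicTrace σ (σ x) := by
        simp_rw [cyclicTrace_apply, map_sum, ← RingAut.mul_apply, ← pow_succ', pow_succ]
    _ = cyclicTrace σ x := cyclicTrace_apply_self σ x

theorem cyclicTrace_mul_of_apply_eq_self (x : K) {y : K} (hy : σ y = y) :
    cyclicTrace σ (x * y) = cyclicTrace σ x * y := by
  simp_rw [cyclicTrace_apply, map_mul, pow_apply_of_apply_eq_self σ hy, sum_mul]

theorem cyclicTrace_of_apply_eq_self {x : K} (hx : σ x = x) :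
    cyclicTrace σ x = orderOf σ * x := by
  simp [cyclicTrace_apply, pow_apply_of_apply_eq_self σ hx]

theorem cyclicTrace_pow_char (p : ℕ) [ExpChar K p] (x : K) :
    cyclicTrace σ (x ^ p) = cyclicTrace σ x ^ p := by
  simp_rw [cyclicTrace_apply, map_pow, sum_pow_char]

theorem exists_cyclicTrace_eq_one (hσ : 0 < orderOf σ) : ∃ w, cyclicTrace σ w = 1 := by
  obtain ⟨w, hw⟩ := exists_sum_mul_pow_apply_ne_zero σ (a := 1) hσ one_ne_zero
  simp only [Pi.one_apply, one_mul, ← cyclicTrace_apply] at hw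
  refine ⟨w * (cyclicTrace σ w)⁻¹, ?_⟩
  rw [cyclicTrace_mul_of_apply_eq_self σ _ (by rw [map_inv₀, apply_cyclicTrace]),
    mul_inv_cancel₀ hw]

theorem exists_apply_sub_eq_of_cyclicTrace_eq_zero (hσ : 0 < orderOf σ) {u : K}
    (hu : cyclicTrace σ u = 0) : ∃ c, σ c - c = u := by
  obtain ⟨w, hw⟩ := exists_cyclicTrace_eq_one σ hσ
  set s : ℕ → K := fun i => ∑ j ∈ range i, (σ ^ j) u
  have hs : ∀ i, σ (s i) = s (i + 1) - u := by
    intro i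
    simp only [s, map_sum, ← RingAut.mul_apply, ← pow_succ', sum_range_succ' _ i, pow_zero,
      RingAut.one_apply]
    ring
  have hperiodic : s (orderOf σ) * (σ ^ orderOf σ) w = s 0 * (σ ^ 0) w := by
    rw [show s (orderOf σ) = 0 from hu]
    simp [s]
  set c := ∑ i ∈ range (orderOf σ), s i * (σ ^ i) w
  have hc : σ c = c - u := calc
    σ c = ∑ i ∈ range (orderOf σ), (s (i + 1) * (σ ^ (i + 1)) w - u * (σ ^ i) (σ w)) := by
      simp only [c, map_sum, map_mul, hs, ← RingAut.mul_apply, ← pow_succ', sub_mul]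
      simp only [pow_succ, RingAut.mul_apply]
    _ = c - u * cyclicTrace σ (σ w) := by
      rw [sum_sub_distrib, ← mul_sum, ← cyclicTrace_apply,
        sum_range_succ_eq_of_apply_eq (f := fun i => s i * (σ ^ i) w) hperiodic]
    _ = c - u := by rw [cyclicTrace_apply_self, hw, mul_one]
  exact ⟨-c, by rw [map_neg, hc]; ring⟩

theorem apply_eq_self_of_pow_char_eq_self (p : ℕ) [Fact p.Prime] [CharP K p] {x : K}
    (hx : x ^ p = x) : σ x = x :=
  RingHom.mem_eqLocusField.mp <| (bot_le : ⊥ ≤ RingHom.eqLocusField (σ : K →+* K) (.id K))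
    ((Subfield.mem_bot_iff_pow_eq_self K p).mpr hx)

theorem orderOf_ne_char (p : ℕ) [hp : Fact p.Prime] [CharP K p] [IsSepClosed K] :
    orderOf σ ≠ p := by
  intro hσ
  obtain ⟨w, hw⟩ := exists_cyclicTrace_eq_one σ (hσ ▸ hp.out.pos)
  obtain ⟨c, hc⟩ := exists_apply_sub_eq_of_cyclicTrace_eq_zero σ (hσ ▸ hp.out.pos)
    (u := w ^ p - w) (by rw [map_sub, cyclicTrace_pow_char, hw, one_pow, sub_self])
  obtain ⟨γ, hγ⟩ := IsSepClosed.exists_root_C_mul_X_pow_add_C_mul_X_add_C' p p 1 (-1) (-c)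
    dvd_rfl hp.out.two_le (neg_ne_zero.mpr one_ne_zero)
  have hγp : γ ^ p = γ + c := by linear_combination hγ
  set d := σ γ - γ - w
  have hd : d ^ p = d := by
    rw [sub_pow_char, sub_pow_char, ← map_pow, hγp, map_add]
    linear_combination hc
  have htrace := cyclicTrace_of_apply_eq_self σ (apply_eq_self_of_pow_char_eq_self σ p hd)
  rw [hσ, CharP.cast_eq_zero, zero_mul, map_sub, map_sub, cyclicTrace_apply_self, hw] at htrace
  exact one_ne_zero (neg_eq_zero.mp (by linear_combination htrace))

theorem apply_eq_self_of_pow_prime_eq_one {q : ℕ} [hq : Fact q.Prime] (hσ : σ ^ q = 1) {ζ : K}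
    (hζ : ζ ^ q = 1) : σ ζ = ζ := by
  rcases eq_or_ne ζ 1 with rfl | hζ1
  · exact map_one σ
  have hζ' : IsPrimitiveRoot ζ q := IsPrimitiveRoot.iff_orderOf.mpr (orderOf_eq_prime hζ hζ1)
  set χ := modularCyclotomicCharacter K hζ'.card_rootsOfUnity
  have hχ : χ σ = 1 := by
    have hcoprime : Nat.Coprime q (q - 1) :=
      (Nat.coprime_self_sub_right hq.out.one_lt.le).mpr (Nat.coprime_one_right q)
    rw [← pow_one (χ σ), ← hcoprime, pow_gcd_eq_one]
    exact ⟨by rw [← map_pow, hσ, map_one], ZMod.units_pow_card_sub_one_eq_one q _⟩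
  have hspec := modularCyclotomicCharacter.spec K hζ'.card_rootsOfUnity σ hζ'.toRootsOfUnity.2
  rwa [hχ, Units.val_one, ZMod.val_one, pow_one, hζ'.val_toRootsOfUnity_coe] at hspec

theorem exists_ne_zero_apply_eq_mul (hσ : 0 < orderOf σ) {ζ : K} (hζ : ζ ^ orderOf σ = 1)
    (hσζ : σ ζ = ζ) : ∃ c ≠ 0, σ c = ζ * c := by
  have hζ0 : ζ ≠ 0 := by
    rintro rfl
    simp [hσ.ne'] at hζ
  obtain ⟨θ, hθ⟩ := exists_sum_mul_pow_apply_ne_zero σ (a := fun i => ζ⁻¹ ^ i) hσ (by simp)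
  refine ⟨_, hθ, ?_⟩
  have hperiodic : ζ⁻¹ ^ orderOf σ * (σ ^ orderOf σ) θ = ζ⁻¹ ^ 0 * (σ ^ 0) θ := by
    rw [inv_pow, hζ, pow_orderOf_eq_one]
    simp
  calc σ (∑ i ∈ range (orderOf σ), ζ⁻¹ ^ i * (σ ^ i) θ)
      = ∑ i ∈ range (orderOf σ), ζ * (ζ⁻¹ ^ (i + 1) * (σ ^ (i + 1)) θ) := by
        simp only [map_sum, map_mul, map_pow, map_inv₀, hσζ, ← RingAut.mul_apply, ← pow_succ']
        refine sum_congr rfl fun i _ => ?_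
        rw [pow_succ' ζ⁻¹ i, mul_assoc, mul_inv_cancel_left₀ hζ0]
    _ = ζ * ∑ i ∈ range (orderOf σ), ζ⁻¹ ^ i * (σ ^ i) θ := by
        rw [← mul_sum,
          sum_range_succ_eq_of_apply_eq (f := fun i => ζ⁻¹ ^ i * (σ ^ i) θ) hperiodic]

theorem eq_two_and_exists_apply_eq_neg_of_orderOf_prime [IsSepClosed K] {q : ℕ}
    [hq : Fact q.Prime] [NeZero (q : K)] (hσ : orderOf σ = q) :
    q = 2 ∧ ∃ ξ : K, ξ ^ 2 = -1 ∧ σ ξ = -ξ := by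
  have hσq : σ ^ q = 1 := hσ ▸ pow_orderOf_eq_one σ
  obtain ⟨ζ, hζ⟩ := HasEnoughRootsOfUnity.exists_primitiveRoot K q
  have hσζ := apply_eq_self_of_pow_prime_eq_one σ hσq hζ.pow_eq_one
  obtain ⟨c, hc0, hσc⟩ :=
    exists_ne_zero_apply_eq_mul σ (hσ ▸ hq.out.pos) (hσ ▸ hζ.pow_eq_one) hσζ
  obtain ⟨β, rfl⟩ := IsSepClosed.exists_pow_nat_eq c q
  have hβ : β ≠ 0 := ne_zero_pow hq.out.ne_zero hc0
  set ξ := σ β / β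
  have hξ : ξ ^ q = ζ := by rw [div_pow, ← map_pow, hσc, mul_div_cancel_right₀ _ hc0]
  have hξ0 : ξ ≠ 0 := div_ne_zero ((map_ne_zero σ).mpr hβ) hβ
  set η := σ ξ / ξ
  have hηq : η ^ q = 1 := by
    rw [div_pow, ← map_pow, hξ, hσζ, div_self (hζ.ne_zero hq.out.ne_zero)]
  have hη : σ η = η := apply_eq_self_of_pow_prime_eq_one σ hσq hηq
  have hσξ : σ ξ = η * ξ := (div_mul_cancel₀ _ hξ0).symm
  have hnorm : ∏ i ∈ range q, (σ ^ i) ξ = 1 := by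
    rw [← hσ]
    exact prod_range_orderOf_pow_apply_div_self σ hβ
  simp_rw [pow_apply_of_apply_eq_mul σ hη hσξ] at hnorm
  rw [prod_mul_distrib, prod_pow_eq_pow_sum, prod_const, card_range, hξ] at hnorm
  rcases hq.out.eq_two_or_odd' with rfl | ⟨k, hk⟩
  · have hζ2 := hζ.eq_neg_one_of_two_right
    have hη2 : η = -1 := by
      simp only [sum_range_succ, sum_range_zero, hζ2] at hnorm
      linear_combination -hnorm
    exact ⟨rfl, ξ, hξ.trans hζ2, by rw [hσξ, hη2]; ring⟩
  · have hsum : ∑ i ∈ range q, i = q * k := by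
      rw [sum_range_id, hk, Nat.add_sub_cancel, mul_comm 2 k, ← mul_assoc,
        Nat.mul_div_cancel _ two_pos]
    rw [hsum, pow_mul, hηq, one_pow, one_mul] at hnorm
    exact absurd hnorm (hζ.ne_one hq.out.one_lt)

theorem exists_apply_eq_self_sq_eq_natCast [IsSepClosed K] [NeZero (2 : K)] (hσ : σ ^ 2 = 1)
    {ξ : K} (hξ : ξ ^ 2 = -1) (hσξ : σ ξ = -ξ) (n : ℕ) : ∃ t, σ t = t ∧ t ^ 2 = n := by
  induction n with
  | zero => exact ⟨0, map_zero σ, by simp⟩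
  | succ n ih =>
    obtain ⟨t, hσt, ht⟩ := ih
    obtain ⟨v, hv⟩ := IsSepClosed.exists_pow_nat_eq (t + ξ) 2
    refine ⟨v * σ v, ?_, ?_⟩
    · rw [map_mul, ← RingAut.mul_apply σ σ v, ← sq, hσ, RingAut.one_apply, mul_comm]
    · rw [mul_pow, ← map_pow, hv, map_add, hσt, hσξ]
      push_cast
      linear_combination ht - hξ

theorem apply_ne_neg_of_sq_eq_neg_one [IsSepClosed K] [NeZero (2 : K)] (p : ℕ) [CharP K p]
    (hp : p ≠ 0) (hσ : σ ^ 2 = 1) {ξ : K} (hξ : ξ ^ 2 = -1) : σ ξ ≠ -ξ := by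
  intro hσξ
  obtain ⟨t, hσt, ht⟩ := exists_apply_eq_self_sq_eq_natCast σ hσ hξ hσξ (p - 1)
  rw [Nat.cast_pred (Nat.pos_of_ne_zero hp), CharP.cast_eq_zero, zero_sub, ← hξ] at ht
  have hσξ' : σ ξ = ξ := by
    rcases sq_eq_sq_iff_eq_or_eq_neg.mp ht with rfl | rfl
    · exact hσt
    · simpa using hσt
  have hξ0 : ξ ≠ 0 := by
    rintro rfl
    simp at hξ
  have h2ξ : (2 : K) * ξ = 0 := by linear_combination hσξ - hσξ'
  exact hξ0 ((mul_eq_zero.mp h2ξ).resolve_left two_ne_zero)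

end RingEquiv

open RingEquiv in
/-- Artin–Schreier consequence: there are no nontrivial finite-order field automorphisms
of a separably closed field of positive characteristic. -/
theorem finiteOrder_automorphism_of_sepClosed_eq_id (K : Type*) [Field K] (p : ℕ)
    (hp : p ≠ 0) [CharP K p] [IsSepClosed K] (σ : K ≃+* K) (n : ℕ) (hn : 0 < n)
    (h : σ ^ n = 1) : σ = RingEquiv.refl K := by
  have : NeZero p := ⟨hp⟩
  have hp' := CharP.char_is_prime_of_pos K p
  by_contra hσ
  have hord : orderOf σ ≠ 0 := (Nat.pos_of_dvd_of_pos (orderOf_dvd_of_pow_eq_one h) hn).ne'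
  have hσ1 : orderOf σ ≠ 1 := fun h1 => hσ (orderOf_eq_one_iff.mp h1)
  obtain ⟨q, hq, hqσ⟩ := Nat.exists_prime_and_dvd hσ1
  have : Fact q.Prime := ⟨hq⟩
  obtain ⟨τ, hτ⟩ : ∃ τ : K ≃+* K, orderOf τ = q := ⟨_, orderOf_pow_orderOf_div hord hqσ⟩
  rcases eq_or_ne q p with rfl | hqp
  · exact orderOf_ne_char τ q hτ
  · have : NeZero (q : K) := ⟨fun hq0 => hqp ((Nat.prime_dvd_prime_iff_eq hp'.out hq).mp
      ((CharP.cast_eq_zero_iff K p q).mp hq0)).symm⟩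
    obtain ⟨rfl, ξ, hξ, hτξ⟩ := eq_two_and_exists_apply_eq_neg_of_orderOf_prime τ hτ
    exact apply_ne_neg_of_sq_eq_neg_one τ p hp (hτ ▸ pow_orderOf_eq_one τ) hξ hτξ
end

section
/- Let K ⊆ L be a field extension of characteristic p > 0, and suppose K carries derivations D_1, …, D_e with ∩_i ker(D_i) = K^p, and these derivations extend to L. If the constants condition holds (the common kernel of the D_i in K equals K^p), then the extension K ⊆ L is separable (i.e. L is linearly disjoint from K^{1/p} over K). -/
/-- The kernel of a derivation on a field, as a subfield (the field of constants). -/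
def derivationKer (k : Type*) {K : Type*} [CommRing k] [Field K] [Algebra k K]
    (d : Derivation k K K) : Subfield K where
  carrier := {x | d x = 0}
  zero_mem' := by simp
  one_mem' := by simp
  add_mem' := by
    intro a b ha hb
    simp only [Set.mem_setOf_eq] at *
    simp [ha, hb]
  neg_mem' := by
    intro a ha
    simp only [Set.mem_setOf_eq] at *
    simp [ha]
  mul_mem' := by
    intro a b ha hb
    simp only [Set.mem_setOf_eq] at *
    rw [Derivation.leibniz]
    simp [ha, hb]
  inv_mem' := by
    intro a ha
    simp only [Set.mem_setOf_eq] at *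
    rcases eq_or_ne a 0 with rfl | h0
    · simp
    · have h := d.leibniz a a⁻¹
      rw [mul_inv_cancel₀ h0, Derivation.map_one_eq_zero, ha] at h
      have : a • d a⁻¹ = 0 := by simpa using h.symm
      rcases smul_eq_zero.mp this with h1 | h1
      · exact absurd h1 h0
      · exact h1

/-!
A `K^p`-independent family `a₁, …, aₙ` in `K` has a nonvanishing generalized Wronskian
`det (θᵢ aⱼ)`, the `θᵢ` being composites of the `Dᵢ`. This is proved by induction on `n`:
if no further operator `θ` extends a nonsingular `n × n` minor, the coefficients expressing
the column of `aₙ₊₁` through those of `a₁, …, aₙ` work for every `θ`; differentiating that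
relation shows they are killed by every `Dᵢ`, so they lie in `K^p` and `aₙ₊₁` depends on the
others. The Wronskian maps to the one built from the extended derivations on `L`, where it is
still nonsingular; since those derivations kill `L^p`, a relation `∑ gⱼ aⱼ = 0` with
`gⱼ ∈ L^p` is annihilated by that matrix.
-/

open Matrix

lemma Matrix.det_ne_zero_of_submatrix_castSucc {K : Type*} [Field K] {n : ℕ}
    (N : Matrix (Fin (n + 1)) (Fin (n + 1)) K) (c : Fin n → K)
    (hM : (N.submatrix Fin.castSucc Fin.castSucc).det ≠ 0)
    (hc : N.submatrix Fin.castSucc Fin.castSucc *ᵥ c = fun i => N i.castSucc (Fin.last n))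
    (hlast : (fun j => N (Fin.last n) j.castSucc) ⬝ᵥ c ≠ N (Fin.last n) (Fin.last n)) :
    N.det ≠ 0 := by
  intro hN
  obtain ⟨v, hv0, hv⟩ := exists_mulVec_eq_zero_iff.mpr hN
  set t := v (Fin.last n)
  have hrow i : (N *ᵥ v) i = (fun j => N i j.castSucc) ⬝ᵥ Fin.init v + N i (Fin.last n) * t := by
    simp [mulVec, dotProduct, Fin.sum_univ_castSucc, Fin.init, t]
  have hinit : Fin.init v = -(t • c) := by
    refine eq_neg_of_add_eq_zero_left (eq_zero_of_mulVec_eq_zero hM ?_)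
    rw [mulVec_add, mulVec_smul, hc]
    funext i
    have := congrFun hv i.castSucc
    rw [hrow] at this
    simp only [mulVec, dotProduct, submatrix_apply, Pi.add_apply, Pi.smul_apply, smul_eq_mul,
      Pi.zero_apply] at this ⊢
    linear_combination this
  have ht : t = 0 := by
    have := congrFun hv (Fin.last n)
    rw [hrow, hinit, dotProduct_neg, dotProduct_smul, smul_eq_mul, Pi.zero_apply] at this
    have : t * (N (Fin.last n) (Fin.last n) - (fun j => N (Fin.last n) j.castSucc) ⬝ᵥ c) = 0 := by
      linear_combination this
    exact (mul_eq_zero.mp this).resolve_right (sub_ne_zero.mpr hlast.symm)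
  apply hv0
  rw [← Fin.snoc_init_self v, hinit, ht]
  ext j
  refine Fin.lastCases ?_ (fun j => ?_) j <;> simp [ht, t]

section WordOp

variable {ι R A : Type*} [CommRing R] [CommRing A] [Algebra R A]

def wordOp (D : ι → Derivation R A A) (w : List ι) : Module.End R A :=
  (w.map fun i => (D i : A →ₗ[R] A)).prod

@[simp]
lemma wordOp_nil (D : ι → Derivation R A A) (x : A) : wordOp D [] x = x := rfl

@[simp]
lemma wordOp_cons (D : ι → Derivation R A A) (i : ι) (w : List ι) (x : A) :
    wordOp D (i :: w) x = D i (wordOp D w x) := by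
  simp [wordOp, Module.End.mul_apply]

lemma wordOp_mul_of_forall_eq_zero (D : ι → Derivation R A A) {c : A} (hc : ∀ i, D i c = 0)
    (w : List ι) (x : A) : wordOp D w (c * x) = c * wordOp D w x := by
  induction w with
  | nil => rfl
  | cons i w ih => simp [ih, Derivation.leibniz, hc]

lemma wordOp_algebraMap {B : Type*} [CommRing B] [Algebra R B] [Algebra A B]
    (D : ι → Derivation R A A) (D' : ι → Derivation R B B)
    (hext : ∀ i x, D' i (algebraMap A B x) = algebraMap A B (D i x)) (w : List ι) (x : A) :
    wordOp D' w (algebraMap A B x) = algebraMap A B (wordOp D w x) := by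
  induction w with
  | nil => rfl
  | cons i w ih => simp [ih, hext]

def wronskian {m n : Type*} (D : ι → Derivation R A A) (θ : m → List ι) (a : n → A) :
    Matrix m n A :=
  of fun i j => wordOp D (θ i) (a j)

lemma wronskian_map {B : Type*} [CommRing B] [Algebra R B] [Algebra A B] {m n : Type*}
    (D : ι → Derivation R A A) (D' : ι → Derivation R B B)
    (hext : ∀ i x, D' i (algebraMap A B x) = algebraMap A B (D i x)) (θ : m → List ι)
    (a : n → A) :
    (wronskian D θ a).map (algebraMap A B) = wronskian D' θ (fun j => algebraMap A B (a j)) := by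
  ext i j
  simp [wronskian, wordOp_algebraMap D D' hext]

end WordOp

section Field

variable {ι R K : Type*} [CommRing R] [Field K] [Algebra R K]

lemma mem_iInf_derivationKer {D : ι → Derivation R K K} {x : K} :
    x ∈ ⨅ i, derivationKer R (D i) ↔ ∀ i, D i x = 0 := by
  simp only [Subfield.mem_iInf]
  rfl

lemma pPowSubfield_le_derivationKer (p : ℕ) [CharP K p] (d : Derivation R K K) :
    pPowSubfield K p ≤ derivationKer R d := by
  rw [pPowSubfield, Subfield.closure_le]
  rintro _ ⟨y, rfl⟩
  show d (y ^ p) = 0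
  rw [Derivation.leibniz_pow, ← Nat.cast_smul_eq_nsmul K, CharP.cast_eq_zero, zero_smul]

theorem linearIndependent_of_wronskian_det_ne_zero {n : ℕ} (D : ι → Derivation R K K)
    {F : Subfield K} (hF : F ≤ ⨅ i, derivationKer R (D i)) (θ : Fin n → List ι) (a : Fin n → K)
    (hθ : (wronskian D θ a).det ≠ 0) : LinearIndependent F a := by
  rw [Fintype.linearIndependent_iff]
  intro g hg j
  have hrows : wronskian D θ a *ᵥ (fun j => (g j : K)) = 0 := by
    funext i
    have hconst j : ∀ k, D k (g j) = 0 := mem_iInf_derivationKer.mp (hF (g j).2)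
    have := congrArg (wordOp D (θ i)) hg
    simp only [Subfield.smul_def, smul_eq_mul, map_sum, map_zero,
      wordOp_mul_of_forall_eq_zero D (hconst _)] at this
    simpa [mulVec, dotProduct, wronskian, mul_comm] using this
  exact Subtype.ext (congrFun (eq_zero_of_mulVec_eq_zero hθ hrows) j)

lemma mem_iInf_derivationKer_of_wordOp_eq_dotProduct {n : ℕ} (D : ι → Derivation R K K)
    (θ : Fin n → List ι) (y c : Fin n → K) (x : K) (hθ : (wronskian D θ y).det ≠ 0)
    (h : ∀ w, (fun j => wordOp D w (y j)) ⬝ᵥ c = wordOp D w x) (j : Fin n) :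
    c j ∈ ⨅ i, derivationKer R (D i) := by
  refine mem_iInf_derivationKer.mpr fun k => ?_
  have hk : wronskian D θ y *ᵥ (fun j => D k (c j)) = 0 := by
    funext i
    have h1 := h (k :: θ i)
    have h2 := congrArg (D k) (h (θ i))
    simp only [dotProduct, map_sum, Derivation.leibniz, smul_eq_mul, Finset.sum_add_distrib,
      wordOp_cons, mul_comm (c _)] at h1 h2
    simp only [mulVec, dotProduct, wronskian, of_apply, Pi.zero_apply]
    linear_combination h2 - h1
  exact congrFun (eq_zero_of_mulVec_eq_zero hθ hk) j

theorem exists_wronskian_det_ne_zero (D : ι → Derivation R K K) :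
    ∀ {n : ℕ} (a : Fin n → K), LinearIndependent ↥(⨅ i, derivationKer R (D i)) a →
      ∃ θ : Fin n → List ι, (wronskian D θ a).det ≠ 0
  | 0, _, _ => ⟨finZeroElim, by simp⟩
  | n + 1, a, ha => by
    rw [← Fin.snoc_init_self a, linearIndependent_finSnoc] at ha
    obtain ⟨θ, hθ⟩ := exists_wronskian_det_ne_zero D _ ha.1
    set b : Fin n → K := fun i => wordOp D (θ i) (a (Fin.last n))
    set c := (wronskian D θ (Fin.init a))⁻¹ *ᵥ b
    have hc : wronskian D θ (Fin.init a) *ᵥ c = b := by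
      rw [mulVec_mulVec, mul_nonsing_inv _ (isUnit_iff_ne_zero.mpr hθ), one_mulVec]
    by_contra! hsing
    have hw w : (fun j => wordOp D w (Fin.init a j)) ⬝ᵥ c = wordOp D w (a (Fin.last n)) := by
      by_contra hw
      have hsub : (wronskian D (Fin.snoc θ w) a).submatrix Fin.castSucc Fin.castSucc =
          wronskian D θ (Fin.init a) := by
        ext i j
        simp [wronskian, Fin.init]
      refine absurd (hsing (Fin.snoc θ w)) (det_ne_zero_of_submatrix_castSucc _ c ?_ ?_ ?_)
      · rwa [hsub]
      · rw [hsub, hc]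
        simp [b, wronskian]
      · simpa [wronskian, Fin.init] using hw
    refine ha.2 ((Submodule.mem_span_range_iff_exists_fun _).mpr
      ⟨fun j => ⟨c j, mem_iInf_derivationKer_of_wordOp_eq_dotProduct D θ _ c _ hθ hw j⟩, ?_⟩)
    simpa [Subfield.smul_def, dotProduct, mul_comm] using hw []

end Field

theorem separable_of_derivations_extend_general (p e : ℕ)
    (K L : Type*) [Field K] [Field L] [Algebra K L] [CharP L p]
    (D : Fin e → Derivation ℤ K K) (D' : Fin e → Derivation ℤ L L)
    (hext : ∀ i (x : K), D' i (algebraMap K L x) = algebraMap K L (D i x))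
    (hker : (⨅ i, derivationKer ℤ (D i)) = pPowSubfield K p) :
    ∀ (n : ℕ) (a : Fin n → K), LinearIndependent (pPowSubfield K p) a →
      LinearIndependent (pPowSubfield L p) (fun i => algebraMap K L (a i)) := by
  intro n a ha
  obtain ⟨θ, hθ⟩ := exists_wronskian_det_ne_zero D a (hker ▸ ha)
  refine linearIndependent_of_wronskian_det_ne_zero D'
    (le_iInf fun i => pPowSubfield_le_derivationKer p (D' i)) θ _ ?_
  rw [← wronskian_map D D' hext, ← RingHom.mapMatrix_apply, ← RingHom.map_det]
  exact (map_ne_zero_iff _ (algebraMap K L).injective).mpr hθ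

/-- Let `K ⊆ L` be a field extension of characteristic `p > 0` and suppose `K` carries
derivations `D₁, …, D_e` with `⋂ ker Dᵢ = K^p` which extend to derivations of `L`. Then
the extension `K ⊆ L` is separable, i.e. `L` is linearly disjoint from `K^{1/p}` over `K`;
equivalently (MacLane's criterion), every family of elements of `K` that is linearly
independent over `K^p` remains linearly independent over `L^p` in `L`. -/
theorem separable_of_derivations_extend (p e : ℕ) [Fact p.Prime]
    (K L : Type*) [Field K] [Field L] [Algebra K L] [CharP K p] [CharP L p]
    (D : Fin e → Derivation ℤ K K) (D' : Fin e → Derivation ℤ L L)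
    (hext : ∀ i (x : K), D' i (algebraMap K L x) = algebraMap K L (D i x))
    (hker : (⨅ i, derivationKer ℤ (D i)) = pPowSubfield K p) :
    ∀ (n : ℕ) (a : Fin n → K), LinearIndependent (pPowSubfield K p) a →
      LinearIndependent (pPowSubfield L p) (fun i => algebraMap K L (a i)) :=
  separable_of_derivations_extend_general p e K L D D' hext hker
end
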